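/- Let G be a group, A a group acting on G via automorphisms, k ≥ 2, and H = [G,A]. If A fixes every element of order dividing p (dividing 4 if p = 2) in γ_k(G,A), then Ω(γ_{k-1}(H)) ≤ Ω(γ_k(G,A)) ≤ Z(H), i.e., every element of order dividing p (4 if p=2) in γ_{k-1}(H) lies in γ_k(G,A), and every such element of γ_k(G,A) is centralized by H. -/

import Mathlib

open SemidirectProduct
open scoped commutatorElement

/-- Left-normed commutator `[x, l₁, l₂, …]`. -/
def lnc {S : Type*} [Group S] (x : S) (l : List S) : S :=
  l.foldl (fun c y => ⁅c, y⁆) x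

/-- `γ_k(G,A)`: the subgroup of the semidirect product `G ⋊[φ] A` generated by all
left-normed commutators `[x₁,…,xₙ]` with `n ≥ k`, `x₁ ∈ G`, each `xᵢ ∈ G ∪ A`,
and at least `k-1` of the `xᵢ` in `A`. -/
def gammaGA {G A : Type*} [Group G] [Group A] (φ : A →* MulAut G) (k : ℕ) :
    Subgroup (G ⋊[φ] A) :=
  Subgroup.closure {x | ∃ (g : G) (l : List (G ⋊[φ] A)),
      k ≤ l.length + 1 ∧
      (∀ y ∈ l, (∃ h : G, y = inl h) ∨ (∃ a : A, y = inr a)) ∧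
      (∃ s : Finset (Fin l.length), k - 1 ≤ s.card ∧
        ∀ i ∈ s, ∃ a : A, l.get i = inr a) ∧
      x = lnc (inl g) l}

/-! The subgroup `γ_k(G,A)` is normal in `G ⋊ A`; a commutator with an element of `G` stays in
`γ_k(G,A)` and one with an element of `A` lands in `γ_{k+1}(G,A)`. By the three subgroups lemma,
`⁅γ_k(G,A), H⁆ ≤ γ_{k+1}(G,A)`, so `γ_{k-1}(H) ≤ γ_k(G,A)` by induction from `H ≤ γ_2(G,A)`.

If `x ∈ γ_k(G,A)` has `x ^ p = 1` (resp. `x ^ 4 = 1`), so has every `g⁻¹ x g` with `g ∈ G`,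
hence each `a ∈ A` commutes with both `x` and `g⁻¹ x g`; this already forces `⁅g, a⁆` to commute
with `x`, and these commutators generate `H`. -/

namespace List

variable {α : Type*} {P : α → Prop} {l : List α} {s : Finset (Fin l.length)}

lemma exists_finset_append_singleton (hs : ∀ i ∈ s, P (l.get i)) (z : α) :
    ∃ t : Finset (Fin (l ++ [z]).length),
      t.card = s.card ∧ ∀ i ∈ t, i.val < l.length ∧ P ((l ++ [z]).get i) := by
  refine ⟨s.map (Fin.castLEEmb (by simp)), Finset.card_map _, fun _ hj => ?_⟩
  obtain ⟨i, hi, rfl⟩ := Finset.mem_map.mp hj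
  refine ⟨i.isLt, ?_⟩
  simpa [List.getElem_append_left i.isLt] using hs i hi

lemma exists_finset_append_singleton_succ (hs : ∀ i ∈ s, P (l.get i)) {z : α} (hz : P z) :
    ∃ t : Finset (Fin (l ++ [z]).length), t.card = s.card + 1 ∧ ∀ i ∈ t, P ((l ++ [z]).get i) := by
  obtain ⟨t, hcard, ht⟩ := exists_finset_append_singleton hs z
  let last : Fin (l ++ [z]).length := ⟨l.length, by simp⟩
  have hlast : last ∉ t := fun h => (ht last h).1.false
  refine ⟨Finset.cons last t hlast, by rw [Finset.card_cons, hcard], fun i hi => ?_⟩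
  rcases Finset.mem_cons.mp hi with rfl | hi
  · simpa [last] using hz
  · exact (ht i hi).2

end List

namespace Subgroup

variable {P : Type*} [Group P]

lemma commutator_closure_le {S : Set P} {K N : Subgroup P} [N.Normal]
    (h : ∀ s ∈ S, ∀ k ∈ K, ⁅s, k⁆ ∈ N) : ⁅closure S, K⁆ ≤ N := by
  rw [← QuotientGroup.ker_mk' N, ← map_eq_bot_iff, map_commutator,
    commutator_eq_bot_iff_le_centralizer, MonoidHom.map_closure, closure_le]
  rintro _ ⟨s, hs, rfl⟩ _ ⟨k, hk, rfl⟩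
  rw [← commutatorElement_eq_one_iff_mul_comm, ← map_commutatorElement,
    ← MonoidHom.mem_ker, QuotientGroup.ker_mk', ← commutatorElement_inv]
  exact inv_mem (h s hs k hk)

lemma commutator_commutator_le_of_rotate {H₁ H₂ H₃ N : Subgroup P} [N.Normal]
    (h1 : ⁅⁅H₂, H₃⁆, H₁⁆ ≤ N) (h2 : ⁅⁅H₃, H₁⁆, H₂⁆ ≤ N) : ⁅⁅H₁, H₂⁆, H₃⁆ ≤ N := by
  simp only [← QuotientGroup.ker_mk' N, ← map_eq_bot_iff, map_commutator] at h1 h2 ⊢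
  exact commutator_commutator_eq_bot_of_rotate h1 h2

end Subgroup

lemma lnc_concat {S : Type*} [Group S] (x : S) (l : List S) (z : S) :
    lnc x (l ++ [z]) = ⁅lnc x l, z⁆ := by
  simp [lnc]

section SemidirectProduct

variable {G A : Type*} [Group G] [Group A] {φ : A →* MulAut G}

variable (φ) in
def gammaGASet (k : ℕ) : Set (G ⋊[φ] A) :=
  {x | ∃ (g : G) (l : List (G ⋊[φ] A)),
      k ≤ l.length + 1 ∧
      (∀ y ∈ l, (∃ h : G, y = inl h) ∨ (∃ a : A, y = inr a)) ∧
      (∃ s : Finset (Fin l.length), k - 1 ≤ s.card ∧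
        ∀ i ∈ s, ∃ a : A, l.get i = inr a) ∧
      x = lnc (inl g) l}

lemma gammaGA_eq_closure (k : ℕ) : gammaGA φ k = Subgroup.closure (gammaGASet φ k) := rfl

lemma commutatorElement_mem_gammaGASet {k : ℕ} {w z : G ⋊[φ] A} (hw : w ∈ gammaGASet φ k)
    (hz : (∃ h : G, z = inl h) ∨ (∃ a : A, z = inr a)) : ⁅w, z⁆ ∈ gammaGASet φ k := by
  obtain ⟨g, l, hlen, hl, ⟨s, hcard, hs⟩, rfl⟩ := hw
  obtain ⟨t, htcard, ht⟩ :=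
    List.exists_finset_append_singleton (P := fun y => ∃ a : A, y = inr a) hs z
  refine ⟨g, l ++ [z], by simp; omega, ?_, ⟨t, htcard ▸ hcard, fun i hi => (ht i hi).2⟩,
    (lnc_concat _ l z).symm⟩
  simpa [or_imp, forall_and] using ⟨hl, hz⟩

lemma commutatorElement_inr_mem_gammaGASet_succ {k : ℕ} {w : G ⋊[φ] A}
    (hw : w ∈ gammaGASet φ k) (a : A) : ⁅w, inr a⁆ ∈ gammaGASet φ (k + 1) := by
  obtain ⟨g, l, hlen, hl, ⟨s, hcard, hs⟩, rfl⟩ := hw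
  obtain ⟨t, htcard, ht⟩ :=
    List.exists_finset_append_singleton_succ (P := fun y => ∃ b : A, y = inr b) hs ⟨a, rfl⟩
  refine ⟨g, l ++ [inr a], by simp; omega, ?_, ⟨t, by omega, ht⟩, (lnc_concat _ l _).symm⟩
  simpa [or_imp, forall_and] using hl

lemma conj_mem_gammaGA {k : ℕ} {z x : G ⋊[φ] A}
    (hz : (∃ h : G, z = inl h) ∨ (∃ a : A, z = inr a)) (hx : x ∈ gammaGA φ k) :
    z * x * z⁻¹ ∈ gammaGA φ k := by
  suffices (gammaGA φ k).map (MulAut.conj z).toMonoidHom ≤ gammaGA φ k from this ⟨x, hx, rfl⟩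
  rw [gammaGA_eq_closure, MonoidHom.map_closure, Subgroup.closure_le]
  rintro _ ⟨w, hw, rfl⟩
  have hconj : z * w * z⁻¹ = ⁅w, z⁆⁻¹ * w := by
    simp [commutatorElement_def, mul_assoc]
  show z * w * z⁻¹ ∈ _
  rw [hconj]
  exact mul_mem (inv_mem (Subgroup.subset_closure (commutatorElement_mem_gammaGASet hw hz)))
    (Subgroup.subset_closure hw)

instance gammaGA_normal (k : ℕ) : (gammaGA φ k).Normal where
  conj_mem x hx n := by
    convert conj_mem_gammaGA (Or.inl ⟨n.left, rfl⟩) (conj_mem_gammaGA (Or.inr ⟨n.right, rfl⟩) hx)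
      using 1
    conv_lhs => rw [← inl_left_mul_inr_right n]
    group

lemma commutator_map_inl_le (k : ℕ) :
    ⁅gammaGA φ k, (⊤ : Subgroup G).map (inl : G →* G ⋊[φ] A)⁆ ≤ gammaGA φ k :=
  Subgroup.commutator_closure_le fun _ hw _ ⟨g, _, hg⟩ => hg ▸
    Subgroup.subset_closure (commutatorElement_mem_gammaGASet hw (Or.inl ⟨g, rfl⟩))

lemma commutator_map_inr_le (k : ℕ) :
    ⁅gammaGA φ k, (⊤ : Subgroup A).map (inr : A →* G ⋊[φ] A)⁆ ≤ gammaGA φ (k + 1) :=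
  Subgroup.commutator_closure_le fun _ hw _ ⟨a, _, ha⟩ => ha ▸
    Subgroup.subset_closure (commutatorElement_inr_mem_gammaGASet_succ hw a)

lemma commutator_gammaGA_commutator_le (k : ℕ) :
    ⁅gammaGA φ k, ⁅(⊤ : Subgroup G).map (inl : G →* G ⋊[φ] A),
      (⊤ : Subgroup A).map (inr : A →* G ⋊[φ] A)⁆⁆ ≤ gammaGA φ (k + 1) := by
  rw [Subgroup.commutator_comm]
  apply Subgroup.commutator_commutator_le_of_rotate
  · rw [Subgroup.commutator_comm _ (gammaGA φ k)]
    exact (Subgroup.commutator_mono (commutator_map_inr_le k) le_rfl).trans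
      (commutator_map_inl_le (k + 1))
  · exact (Subgroup.commutator_mono (commutator_map_inl_le k) le_rfl).trans
      (commutator_map_inr_le k)

lemma commutator_le_gammaGA_two :
    ⁅(⊤ : Subgroup G).map (inl : G →* G ⋊[φ] A),
      (⊤ : Subgroup A).map (inr : A →* G ⋊[φ] A)⁆ ≤ gammaGA φ 2 := by
  rw [Subgroup.commutator_le]
  rintro _ ⟨g, -, rfl⟩ _ ⟨a, -, rfl⟩
  refine Subgroup.subset_closure
    ⟨g, [inr a], le_rfl, by simp, ⟨Finset.univ, by simp, fun i _ => ⟨a, ?_⟩⟩, by simp [lnc]⟩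
  fin_cases i
  rfl

lemma lowerCentralSeries_le_gammaGA (n : ℕ) :
    (⁅(⊤ : Subgroup G).map (inl : G →* G ⋊[φ] A),
      (⊤ : Subgroup A).map (inr : A →* G ⋊[φ] A)⁆).lowerCentralSeries n ≤ gammaGA φ (n + 2) := by
  induction n with
  | zero => exact commutator_le_gammaGA_two
  | succ n ih =>
    exact (Subgroup.commutator_mono ih le_rfl).trans (commutator_gammaGA_commutator_le (n + 2))

end SemidirectProduct

lemma commute_commutatorElement_of_commute {P : Type*} [Group P] {x g a : P}
    (hx : Commute a x) (hconj : Commute a (g⁻¹ * x * g)) : Commute ⁅g, a⁆ x := by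
  have hx' : a⁻¹ * x = x * a⁻¹ := hx.inv_left.eq
  calc ⁅g, a⁆ * x = g * (a * (g⁻¹ * x * g)) * g⁻¹ * a⁻¹ := by
        rw [commutatorElement_def, mul_assoc _ a⁻¹, hx']; group
    _ = g * ((g⁻¹ * x * g) * a) * g⁻¹ * a⁻¹ := by rw [hconj.eq]
    _ = x * ⁅g, a⁆ := by rw [commutatorElement_def]; group

theorem stmt3_general {G A : Type*} [Group G] [Group A] (φ : A →* MulAut G)
    (p : ℕ) (k : ℕ) (hk : 2 ≤ k)
    (H : Subgroup (G ⋊[φ] A))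
    (hH : H = ⁅(⊤ : Subgroup G).map (inl : G →* G ⋊[φ] A),
               (⊤ : Subgroup A).map (inr : A →* G ⋊[φ] A)⁆)
    (hfix : ∀ x ∈ gammaGA φ k, x ^ (if p = 2 then 4 else p) = 1 →
      ∀ a : A, (inr a : G ⋊[φ] A) * x * (inr a : G ⋊[φ] A)⁻¹ = x) :
    (∀ x ∈ lowerCentralSeries H (k - 2), ((x : G ⋊[φ] A)) ^ (if p = 2 then 4 else p) = 1 →
        (x : G ⋊[φ] A) ∈ gammaGA φ k) ∧
    (∀ x ∈ gammaGA φ k, x ^ (if p = 2 then 4 else p) = 1 →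
        ∀ y ∈ H, x * y = y * x) := by
  generalize (if p = 2 then 4 else p) = q at hfix ⊢
  subst hH
  refine ⟨fun x hx _ => ?_, fun x hx hxq y hy => ?_⟩
  · simpa only [Nat.sub_add_cancel hk] using lowerCentralSeries_le_gammaGA (k - 2) hx
  · have hcomm (w : G ⋊[φ] A) (hw : w ∈ gammaGA φ k) (hwq : w ^ q = 1) (a : A) :
        Commute (inr a) w :=
      mul_inv_eq_iff_eq_mul.mp (hfix w hw hwq a)
    suffices hle : _ ≤ Subgroup.centralizer {x} from
      (Subgroup.mem_centralizer_singleton_iff.mp (hle hy)).symm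
    rw [Subgroup.commutator_le]
    rintro _ ⟨g, -, rfl⟩ _ ⟨a, -, rfl⟩
    refine Subgroup.mem_centralizer_singleton_iff.mpr
      (commute_commutatorElement_of_commute (hcomm x hx hxq a) (hcomm _ ?_ ?_ a)).eq
    · simpa using (gammaGA_normal k).conj_mem x hx (inl g)⁻¹
    · simpa [hxq] using conj_pow (a := (inl g : G ⋊[φ] A)⁻¹) (b := x) (i := q)

theorem stmt3 {G A : Type*} [Group G] [Group A] (φ : A →* MulAut G)
    (p : ℕ) [Fact p.Prime] (k : ℕ) (hk : 2 ≤ k)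
    (H : Subgroup (G ⋊[φ] A))
    (hH : H = ⁅(⊤ : Subgroup G).map (inl : G →* G ⋊[φ] A),
               (⊤ : Subgroup A).map (inr : A →* G ⋊[φ] A)⁆)
    (hfix : ∀ x ∈ gammaGA φ k, x ^ (if p = 2 then 4 else p) = 1 →
      ∀ a : A, (inr a : G ⋊[φ] A) * x * (inr a : G ⋊[φ] A)⁻¹ = x) :
    (∀ x ∈ lowerCentralSeries H (k - 2), ((x : G ⋊[φ] A)) ^ (if p = 2 then 4 else p) = 1 →
        (x : G ⋊[φ] A) ∈ gammaGA φ k) ∧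
    (∀ x ∈ gammaGA φ k, x ^ (if p = 2 then 4 else p) = 1 →
        ∀ y ∈ H, x * y = y * x) :=
  stmt3_general φ p k hk H hH hfix
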